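/- Let F and Q be exchangeable information structures on S^N with identical, strictly positive marginals. Then F is CAD-higher than Q if and only if E(Γ,F) ⊆ E(Γ,Q) for every affine congestion game Γ (i.e., every game with β ≤ 0 and affine increasing h). -/

import Mathlib

open Finset

def IsPMF {n : ℕ} {S : Type*} [Fintype S] (F : (Fin (n + 2) → S) → ℝ) : Prop :=
  (∀ t, 0 ≤ F t) ∧ ∑ t : Fin (n + 2) → S, F t = 1

def Exchangeable {n : ℕ} {S : Type*} [Fintype S] (F : (Fin (n + 2) → S) → ℝ) : Prop :=
  ∀ (π : Equiv.Perm (Fin (n + 2))) (t : Fin (n + 2) → S), F (t ∘ π) = F t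

noncomputable def marg {n : ℕ} {S : Type*} [Fintype S] [DecidableEq S]
    (F : (Fin (n + 2) → S) → ℝ) (s : S) : ℝ :=
  ∑ t : Fin (n + 2) → S, if t 0 = s then F t else 0

noncomputable def condProb {n : ℕ} {S : Type*} [Fintype S] [DecidableEq S]
    (F : (Fin (n + 2) → S) → ℝ) (s : S) (K : Finset S) : ℝ :=
  (∑ t : Fin (n + 2) → S, if t 0 = s ∧ t 1 ∈ K then F t else 0) / marg F s

def CAD {n : ℕ} {S : Type*} [Fintype S] [DecidableEq S]
    (F Q : (Fin (n + 2) → S) → ℝ) : Prop :=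
  (∀ s, marg F s = marg Q s) ∧
  ∀ s : S, condProb F s {s} ≥ condProb Q s {s} ∧
    ∀ s' : S, s' ≠ s → condProb F s {s'} ≤ condProb Q s {s'}

/-- An affine congestion game: `d(A,s) = α(s) + β(s)·(k·A + l)` with `β ≤ 0`
(strategic substitutability) and `k > 0`. -/
structure CongestionGame (S : Type*) where
  α : S → ℝ
  β : S → ℝ
  k : ℝ
  l : ℝ
  hβ : ∀ s, β s ≤ 0
  hk : 0 < k

noncomputable def payoff {S : Type*} (G : CongestionGame S) (A : ℕ) (s : S) : ℝ :=
  G.α s + G.β s * (G.k * (A : ℝ) + G.l)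

def acts {n : ℕ} {S : Type*} (σ : S → Bool) (t : Fin (n + 2) → S) : ℕ :=
  (univ.filter (fun j : Fin (n + 2) => j ≠ 0 ∧ σ (t j) = true)).card

noncomputable def U {n : ℕ} {S : Type*} [Fintype S] [DecidableEq S]
    (G : CongestionGame S) (F : (Fin (n + 2) → S) → ℝ) (σ : S → Bool) (s : S) : ℝ :=
  (∑ t : Fin (n + 2) → S, if t 0 = s then F t * payoff G (acts σ t) s else 0) / marg F s

def IsEquilibrium {n : ℕ} {S : Type*} [Fintype S] [DecidableEq S]
    (G : CongestionGame S) (F : (Fin (n + 2) → S) → ℝ) (σ : S → Bool) : Prop :=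
  ∀ s : S, (σ s = true → 0 ≤ U G F σ s) ∧ (σ s = false → U G F σ s ≤ 0)

section Aux
variable {n : ℕ} {S : Type*} [Fintype S] [DecidableEq S]

lemma fin_one_ne_zero : (1 : Fin (n + 2)) ≠ 0 := by
  simp [Fin.ext_iff]

lemma sum_swap_coord (F : (Fin (n+2) → S) → ℝ) (hF : Exchangeable F)
    (s : S) (σ : S → Bool) (j : Fin (n+2)) (hj : j ≠ 0) :
    ∑ t : Fin (n+2) → S, (if t 0 = s ∧ σ (t j) = true then F t else 0)
      = ∑ t : Fin (n+2) → S, (if t 0 = s ∧ σ (t 1) = true then F t else 0) := by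
  apply Fintype.sum_equiv (Equiv.arrowCongr (Equiv.swap 1 j) (Equiv.refl S))
  intro t
  have h0 : Equiv.swap (1 : Fin (n+2)) j 0 = 0 :=
    Equiv.swap_apply_of_ne_of_ne (Ne.symm fin_one_ne_zero) (Ne.symm hj)
  have e1 : (Equiv.arrowCongr (Equiv.swap 1 j) (Equiv.refl S)) t = t ∘ (Equiv.swap 1 j) := by
    ext x; simp [Equiv.arrowCongr, Equiv.symm_apply_eq, Equiv.swap_apply_self]
  rw [e1]
  have hFt : F (t ∘ (Equiv.swap 1 j)) = F t := hF _ t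
  simp only [Function.comp_apply, h0, Equiv.swap_apply_left, hFt]

lemma card_filter_ne_zero : (univ.filter (fun j : Fin (n+2) => j ≠ 0)).card = n + 1 := by
  rw [Finset.filter_ne', Finset.card_erase_of_mem (mem_univ _), Finset.card_univ,
    Fintype.card_fin]
  omega

lemma condProb_sum' (F : (Fin (n+2) → S) → ℝ) (s : S) (K : Finset S) :
    (∑ t : Fin (n+2) → S, if t 0 = s ∧ t 1 ∈ K then F t else 0)
      = ∑ x ∈ K, ∑ t : Fin (n+2) → S, (if t 0 = s ∧ t 1 ∈ ({x} : Finset S) then F t else 0) := by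
  rw [Finset.sum_comm]
  apply Finset.sum_congr rfl
  intro t _
  by_cases h : t 0 = s
  · simp only [h, true_and, Finset.mem_singleton]
    rw [Finset.sum_ite_eq K (t 1) (fun _ => F t)]
  · simp [h]


lemma U_eq (G : CongestionGame S) (F : (Fin (n+2) → S) → ℝ) (hF : Exchangeable F)
    (σ : S → Bool) (s : S) (hm : marg F s ≠ 0) :
    U G F σ s = G.α s + G.β s *
      (G.k * (((n : ℝ) + 1) * condProb F s (univ.filter (fun x => σ x = true))) + G.l) := by
  have hacts : ∀ t : Fin (n+2) → S, ((acts σ t : ℕ) : ℝ)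
      = ∑ j : Fin (n+2), (if j ≠ 0 ∧ σ (t j) = true then (1:ℝ) else 0) := by
    intro t
    rw [acts, Finset.card_filter]
    push_cast
    apply Finset.sum_congr rfl
    intro j _
    split <;> simp
  set K := univ.filter (fun x => σ x = true) with hKdef
  set c := ∑ t : Fin (n+2) → S, (if t 0 = s ∧ σ (t 1) = true then F t else 0) with hc
  have hcnum : (∑ t : Fin (n+2) → S, if t 0 = s ∧ t 1 ∈ K then F t else 0) = c := by
    apply Finset.sum_congr rfl
    intro t _
    simp [hKdef]
  have hA : (∑ t : Fin (n+2) → S, if t 0 = s then F t * ((acts σ t : ℕ) : ℝ) else 0)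
      = ((n : ℝ) + 1) * c := by
    have step : ∀ t : Fin (n+2) → S, (if t 0 = s then F t * ((acts σ t : ℕ) : ℝ) else 0)
        = ∑ j : Fin (n+2), (if j ≠ 0 then (if t 0 = s ∧ σ (t j) = true then F t else 0) else 0) := by
      intro t
      by_cases h : t 0 = s
      · simp only [h, if_true, hacts t, Finset.mul_sum]
        apply Finset.sum_congr rfl
        intro j _
        by_cases hj : j ≠ 0 <;> by_cases hσ : σ (t j) = true <;> simp [hj, hσ, h]
      · simp [h]
    calc (∑ t : Fin (n+2) → S, if t 0 = s then F t * ((acts σ t : ℕ) : ℝ) else 0)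
        = ∑ t : Fin (n+2) → S, ∑ j : Fin (n+2),
            (if j ≠ 0 then (if t 0 = s ∧ σ (t j) = true then F t else 0) else 0) :=
          Finset.sum_congr rfl (fun t _ => step t)
      _ = ∑ j : Fin (n+2), ∑ t : Fin (n+2) → S,
            (if j ≠ 0 then (if t 0 = s ∧ σ (t j) = true then F t else 0) else 0) :=
          Finset.sum_comm
      _ = ∑ j : Fin (n+2), (if j ≠ 0 then c else 0) := by
          apply Finset.sum_congr rfl
          intro j _
          by_cases hj : j ≠ 0
          · rw [if_pos hj]
            simp only [if_pos hj]
            exact (sum_swap_coord F hF s σ j hj).trans hc.symm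
          · rw [if_neg hj]
            simp only [if_neg hj, Finset.sum_const_zero]
      _ = ((n : ℝ) + 1) * c := by
          rw [← Finset.sum_filter, Finset.sum_const, card_filter_ne_zero]
          push_cast
          ring
  have hnum : (∑ t : Fin (n+2) → S, if t 0 = s then F t * payoff G (acts σ t) s else 0)
      = G.α s * marg F s + G.β s * G.k * (((n : ℝ) + 1) * c) + G.β s * G.l * marg F s := by
    have expand : ∀ t : Fin (n+2) → S, (if t 0 = s then F t * payoff G (acts σ t) s else 0)
        = G.α s * (if t 0 = s then F t else 0)
          + G.β s * G.k * (if t 0 = s then F t * ((acts σ t : ℕ) : ℝ) else 0)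
          + G.β s * G.l * (if t 0 = s then F t else 0) := by
      intro t
      by_cases h : t 0 = s <;> simp [h, payoff] <;> ring
    rw [Finset.sum_congr rfl (fun t _ => expand t)]
    rw [Finset.sum_add_distrib, Finset.sum_add_distrib, ← Finset.mul_sum, ← Finset.mul_sum,
      ← Finset.mul_sum, hA]
    rfl
  rw [U, hnum, condProb, hcnum]
  field_simp
  ring

lemma condProb_add (F : (Fin (n+2) → S) → ℝ) (s : S) (K : Finset S) :
    condProb F s K = ∑ x ∈ K, condProb F s {x} := by
  unfold condProb
  rw [← Finset.sum_div, condProb_sum' F s K]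

lemma condProb_univ (F : (Fin (n+2) → S) → ℝ) (s : S) (hm : marg F s ≠ 0) :
    condProb F s univ = 1 := by
  unfold condProb
  rw [div_eq_one_iff_eq hm]
  unfold marg
  apply Finset.sum_congr rfl
  intro t _
  simp

end Aux

/-- `F ⪰CAD Q` iff the equilibrium set weakly shrinks from `Q` to `F`
in every affine congestion game (β ≤ 0, affine increasing h). -/
theorem cad_iff_congestion_equilibrium_shrinks {n : ℕ}
    {S : Type*} [Fintype S] [DecidableEq S] [Nonempty S]
    (F Q : (Fin (n + 2) → S) → ℝ)
    (hFpmf : IsPMF F) (hQpmf : IsPMF Q)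
    (hFex : Exchangeable F) (hQex : Exchangeable Q)
    (hmarg : ∀ s, marg F s = marg Q s)
    (hpos : ∀ s, 0 < marg F s) :
    CAD F Q ↔ ∀ (G : CongestionGame S) (σ : S → Bool),
      IsEquilibrium G F σ → IsEquilibrium G Q σ := by
  have hmF : ∀ x, marg F x ≠ 0 := fun x => (hpos x).ne'
  have hmQ : ∀ x, marg Q x ≠ 0 := fun x => by rw [← hmarg]; exact hmF x
  constructor
  · rintro ⟨-, hC⟩ G σ hEq s
    set K := univ.filter (fun x => σ x = true) with hKdef
    have hUF := U_eq G F hFex σ s (hmF s)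
    have hUQ := U_eq G Q hQex σ s (hmQ s)
    rw [← hKdef] at hUF hUQ
    have hβ := G.hβ s
    have hk := G.hk
    have hn : (0:ℝ) ≤ (n:ℝ) + 1 := by positivity
    cases hσs : σ s with
    | false =>
      have hle : condProb F s K ≤ condProb Q s K := by
        rw [condProb_add, condProb_add]
        apply Finset.sum_le_sum
        intro x hx
        have hxK : σ x = true := (Finset.mem_filter.mp hx).2
        have hxs : x ≠ s := by rintro rfl; rw [hσs] at hxK; exact Bool.false_ne_true hxK
        exact (hC s).2 x hxs
      refine ⟨fun h => absurd h (by simp), fun _ => ?_⟩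
      have hF0 : U G F σ s ≤ 0 := (hEq s).2 hσs
      rw [hUF] at hF0
      rw [hUQ]
      have key : G.β s * (G.k * (((n:ℝ)+1) * condProb Q s K) + G.l)
          ≤ G.β s * (G.k * (((n:ℝ)+1) * condProb F s K) + G.l) := by
        apply mul_le_mul_of_nonpos_left _ hβ
        gcongr
      linarith
    | true =>
      have hsK : s ∈ K := by simp [hKdef, hσs]
      have hge : condProb Q s K ≤ condProb F s K := by
        have htot : ∑ x : S, (condProb F s {x} - condProb Q s {x}) = 0 := by
          rw [Finset.sum_sub_distrib, ← condProb_add F s univ, ← condProb_add Q s univ,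
            condProb_univ F s (hmF s), condProb_univ Q s (hmQ s)]
          ring
        have hsplit := Finset.sum_add_sum_compl K (fun x => condProb F s {x} - condProb Q s {x})
        have hcompl : ∑ x ∈ Kᶜ, (condProb F s {x} - condProb Q s {x}) ≤ 0 := by
          apply Finset.sum_nonpos
          intro x hx
          have hxs : x ≠ s := fun h => (Finset.mem_compl.mp hx) (h ▸ hsK)
          have := (hC s).2 x hxs
          linarith
        have hKsum : condProb F s K - condProb Q s K
            = ∑ x ∈ K, (condProb F s {x} - condProb Q s {x}) := by
          rw [Finset.sum_sub_distrib, ← condProb_add F s K, ← condProb_add Q s K]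
        rw [htot] at hsplit
        linarith [hKsum, hsplit, hcompl]
      refine ⟨fun _ => ?_, fun h => absurd h (by simp)⟩
      have hF0 : 0 ≤ U G F σ s := (hEq s).1 hσs
      rw [hUF] at hF0
      rw [hUQ]
      have key : G.β s * (G.k * (((n:ℝ)+1) * condProb F s K) + G.l)
          ≤ G.β s * (G.k * (((n:ℝ)+1) * condProb Q s K) + G.l) := by
        apply mul_le_mul_of_nonpos_left _ hβ
        gcongr
      linarith
  · intro H
    refine ⟨hmarg, fun s => ⟨?_, fun s' hs' => ?_⟩⟩
    · set G1 : CongestionGame S :=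
        { α := fun x => if x = s then ((n:ℝ)+1) * condProb F s {s} else 0,
          β := fun x => if x = s then -1 else 0,
          k := 1, l := 0,
          hβ := by intro x; split <;> norm_num,
          hk := one_pos } with hG1
      set σ1 : S → Bool := fun x => decide (x = s) with hσ1
      have hK1 : univ.filter (fun x => σ1 x = true) = {s} := by
        ext x; simp [hσ1]
      have heq : IsEquilibrium G1 F σ1 := by
        intro x
        rw [U_eq G1 F hFex σ1 x (hmF x), hK1]
        by_cases hx : x = s
        · subst hx
          constructor
          · intro _
            simp [hG1]
          · intro h
            rw [hσ1] at h
            simp at h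
        · constructor
          · intro h
            rw [hσ1] at h
            simp [hx] at h
          · intro _
            simp [hG1, hx]
      have h1 := (H G1 σ1 heq s).1 (by simp [hσ1])
      rw [U_eq G1 Q hQex σ1 s (hmQ s), hK1] at h1
      simp only [hG1, if_pos rfl, eq_self_iff_true, if_true] at h1
      have hn : (0:ℝ) < (n:ℝ) + 1 := by positivity
      nlinarith [h1]
    · set G2 : CongestionGame S :=
        { α := fun x => if x = s then ((n:ℝ)+1) * condProb F s {s'} else 0,
          β := fun x => if x = s then -1 else 0,
          k := 1, l := 0,
          hβ := by intro x; split <;> norm_num,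
          hk := one_pos } with hG2
      set σ2 : S → Bool := fun x => decide (x = s') with hσ2
      have hK2 : univ.filter (fun x => σ2 x = true) = {s'} := by
        ext x; simp [hσ2]
      have heq : IsEquilibrium G2 F σ2 := by
        intro x
        rw [U_eq G2 F hFex σ2 x (hmF x), hK2]
        by_cases hx : x = s
        · subst hx
          constructor
          · intro h
            rw [hσ2] at h
            simp at h
            exact absurd h.symm hs'
          · intro _
            simp [hG2]
        · constructor
          · intro _
            simp [hG2, hx]
          · intro _
            simp [hG2, hx]
      have h2 := (H G2 σ2 heq s).2 (by simp [hσ2, Ne.symm hs'])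
      rw [U_eq G2 Q hQex σ2 s (hmQ s), hK2] at h2
      simp only [hG2, if_pos rfl, eq_self_iff_true, if_true] at h2
      have hn : (0:ℝ) < (n:ℝ) + 1 := by positivity
      nlinarith [h2]
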